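/- arXiv:2503.15608 — 4 statements merged into one kernel-verified Lean document; each statement's English description precedes it below -/
import Mathlib

section
/- The independence complex of a chordal graph is vertex-decomposable. -/
open Finset

/-- A (finite, abstract) simplicial complex: a nonempty collection of finite
sets closed under taking subsets. -/
def IsComplex {α : Type} [DecidableEq α] (Δ : Finset (Finset α)) : Prop :=
  Δ.Nonempty ∧ ∀ A ∈ Δ, ∀ B ⊆ A, B ∈ Δ

/-- The link of a face `S` in `Δ`. -/
def link {α : Type} [DecidableEq α] (Δ : Finset (Finset α)) (S : Finset α) :
    Finset (Finset α) :=
  Δ.filter fun F => Disjoint F S ∧ F ∪ S ∈ Δ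

/-- The deletion of a vertex `v` from `Δ`. -/
def del {α : Type} [DecidableEq α] (Δ : Finset (Finset α)) (v : α) :
    Finset (Finset α) :=
  Δ.filter fun F => v ∉ F

/-- A facet: a maximal face. -/
def IsFacet {α : Type} (Δ : Finset (Finset α)) (A : Finset α) : Prop :=
  A ∈ Δ ∧ ∀ B ∈ Δ, A ⊆ B → B = A

/-- Vertex-decomposability: `Δ` is a simplex, or has a shedding vertex `v`
(every face containing `v` admits an exchange) whose deletion and link are
both vertex-decomposable. -/
inductive VertexDecomposable {α : Type} [DecidableEq α] :
    Finset (Finset α) → Prop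
  | simplex (A : Finset α) : VertexDecomposable A.powerset
  | shed (Δ : Finset (Finset α)) (v : α)
      (hshed : ∀ A ∈ Δ, v ∈ A → ∃ w, w ≠ v ∧ w ∉ A ∧ insert w (A.erase v) ∈ Δ)
      (hdel : VertexDecomposable (del Δ v))
      (hlink : VertexDecomposable (link Δ {v})) :
      VertexDecomposable Δ

/-- A graph is chordal if every induced cycle has length 3; equivalently, every
cycle of length at least 4 has a chord (an edge of the graph between two
vertices of the cycle that is not an edge of the cycle). -/
def Chordal {V : Type} (G : SimpleGraph V) : Prop :=
  ∀ ⦃v : V⦄ (c : G.Walk v v), c.IsCycle → 4 ≤ c.length →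
    ∃ a b, G.Adj a b ∧ a ∈ c.support ∧ b ∈ c.support ∧ ¬ c.toSubgraph.Adj a b

/-- The independence complex of a graph: its faces are the independent
(edgeless) vertex subsets. -/
def indComplex (n : ℕ) (G : SimpleGraph (Fin n)) [DecidableRel G.Adj] :
    Finset (Finset (Fin n)) :=
  (Finset.univ : Finset (Fin n)).powerset.filter
    fun A => ∀ a ∈ A, ∀ b ∈ A, ¬ G.Adj a b

/-!
Every nonempty vertex set `W` of a chordal graph contains a simplicial vertex of `G[W]`, even one
outside any given proper clique `K` (Dirac). A vertex of `K` adjacent to all of `W` can be removed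
from both. Otherwise pick `x` (in `K` if possible) and a non-neighbour `y` in `W`; the attachment
set in `N(x)` of the component of `y` in `G[W \ N[x]]` is a clique, because a chordless path
between two non-adjacent attachments would close up through `x` to a chordless cycle of length at
least four. Induction on that component together with its
attachments yields a simplicial vertex away from `N[x] ⊇ K`.

If `W` spans an edge, choose a simplicial vertex `v` among the non-isolated vertices of `W` and a
neighbour `u` of it. Then `u` is a shedding vertex of the independence complex of `G[W]`, since `v`
can take its place in any independent set, and the deletion and link of `u` are the independence
complexes of `G[W - u]` and `G[W - N[u]]`, again induced subgraphs of `G`.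
-/

namespace SimpleGraph

variable {V : Type*} {G : SimpleGraph V}

theorem Walk.isChordless_of_length_eq_dist {u v : V} (p : G.Walk u v)
    (hp : p.length = G.dist u v) : p.IsChordless := by
  classical
  induction p with
  | nil =>
    refine isChordless_iff_forall_mem_edges.mpr fun a b ha hb hab => ?_
    simp only [support_nil, List.mem_singleton] at ha hb
    exact absurd (ha ▸ hb ▸ hab) (G.loopless.irrefl _)
  | @cons u u₁ v h q ih =>
    have hq : q.length = G.dist u₁ v := length_eq_dist_of_subwalk hp (isSubwalk_cons q h)
    have hnext : ∀ b ∈ q.support, G.Adj u b → b = u₁ := by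
      intro b hb hub
      by_contra hne
      have hshort := dist_le (cons hub (q.dropUntil b hb))
      have := q.length_dropUntil_lt_length hb hne
      rw [length_cons] at hp hshort
      omega
    rw [isChordless_iff_forall_mem_edges]
    intro a b ha hb hab
    simp only [support_cons, List.mem_cons, edges_cons] at ha hb ⊢
    rcases ha with rfl | ha <;> rcases hb with rfl | hb
    · exact absurd hab (G.loopless.irrefl _)
    · exact .inl (by rw [hnext b hb hab])
    · exact .inl (by rw [hnext a ha hab.symm, Sym2.eq_swap])
    · exact .inr ((ih hq).mem_edges ha hb hab)

def restrict (G : SimpleGraph V) (s : Set V) : SimpleGraph V where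
  Adj u v := u ∈ s ∧ v ∈ s ∧ G.Adj u v
  symm := ⟨fun _ _ h => ⟨h.2.1, h.1, h.2.2.symm⟩⟩
  loopless := ⟨fun _ h => G.loopless.irrefl _ h.2.2⟩

theorem restrict_le (s : Set V) : G.restrict s ≤ G := fun _ _ h => h.2.2

theorem restrict_mono {s t : Set V} (h : s ⊆ t) : G.restrict s ≤ G.restrict t :=
  fun _ _ hadj => ⟨h hadj.1, h hadj.2.1, hadj.2.2⟩

theorem Walk.mem_of_mem_support_restrict {s : Set V} {u v z : V} (p : (G.restrict s).Walk u v)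
    (hu : u ∈ s) (hz : z ∈ p.support) : z ∈ s := by
  induction p with
  | nil => simp_all
  | cons h q ih =>
    rcases List.mem_cons.mp (support_cons _ _ ▸ hz) with rfl | hz
    · exact hu
    · exact ih h.2.1 hz

def IsSimplicialIn (G : SimpleGraph V) (W : Set V) (v : V) : Prop :=
  G.IsClique (W ∩ G.neighborSet v)

theorem IsSimplicialIn.of_neighbors_subset {W W' : Set V} {v : V} (h : G.IsSimplicialIn W' v)
    (hW : ∀ w ∈ W, G.Adj v w → w ∈ W') : G.IsSimplicialIn W v :=
  IsClique.subset (s := W' ∩ G.neighborSet v) (fun w hw => ⟨hW w hw.1 hw.2, hw.2⟩) h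

end SimpleGraph

namespace Chordal

open SimpleGraph Walk

variable {V : Type} {G : SimpleGraph V}

theorem not_isChordless (hG : Chordal G) {v : V} {c : G.Walk v v} (hc : c.IsCycle)
    (hlen : 4 ≤ c.length) : ¬ c.IsChordless := fun hcl => by
  obtain ⟨a, b, hab, ha, hb, hnot⟩ := hG c hc hlen
  exact hnot (Subgraph.mem_edgeSet.mp ((c.mem_edges_toSubgraph).mpr (hcl.mem_edges ha hb hab)))

/-- The cycle `x → a ⇝ b → x` has length at least `4`, and its chord can only leave `x`. -/
theorem exists_adj_of_isChordless (hG : Chordal G) {x a b : V} {p : G.Walk a b}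
    (hp : p.IsPath) (hpc : p.IsChordless) (hlen : 2 ≤ p.length) (hx : x ∉ p.support)
    (hxa : G.Adj x a) (hxb : G.Adj x b) :
    ∃ z ∈ p.support, z ≠ a ∧ z ≠ b ∧ G.Adj x z := by
  by_contra! hno
  have hcycle : (cons hxa (p.concat hxb.symm)).IsCycle := by
    refine (cons_isCycle_iff _ _).mpr ⟨hp.concat hx _, fun h => ?_⟩
    rw [edges_concat, List.concat_eq_append, List.mem_append, List.mem_singleton] at h
    rcases h with h | h
    · exact hx (p.fst_mem_support_of_mem_edges h)
    · rcases Sym2.eq_iff.mp h with ⟨rfl, -⟩ | ⟨-, rfl⟩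
      · exact hx p.end_mem_support
      · rw [(isPath_iff_nil.mp hp).length_eq_zero] at hlen
        omega
  refine hG.not_isChordless hcycle (by simp only [length_cons, length_concat]; omega) ?_
  rw [isChordless_iff_forall_mem_edges]
  have hx_edge : ∀ w ∈ p.support, G.Adj x w → s(x, w) ∈ (cons hxa (p.concat hxb.symm)).edges := by
    intro w hw hxw
    by_cases hwa : w = a
    · simp [hwa]
    · have hwb : w = b := by_contra fun hwb => hno w hw hwa hwb hxw
      simp [hwb]
  intro u w hu hw huw
  simp only [support_cons, support_concat, List.mem_cons, List.mem_append, List.not_mem_nil,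
    or_false] at hu hw
  rcases hu with rfl | hu | rfl <;> rcases hw with rfl | hw | rfl
  all_goals first
    | exact absurd huw (G.loopless.irrefl _)
    | exact hx_edge w hw huw
    | (rw [Sym2.eq_swap]; exact hx_edge u hu huw.symm)
    | simp [hpc.mem_edges hu hw huw]

theorem adj_of_reachable_restrict (hG : Chordal G) {x a b : V} {s : Set V} (hab : a ≠ b)
    (hxa : G.Adj x a) (hxb : G.Adj x b) (hxs : x ∉ s) (hs : ∀ z ∈ s, G.Adj x z → z = a ∨ z = b)
    (ha : a ∈ s) (hr : (G.restrict s).Reachable a b) : G.Adj a b := by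
  by_contra hnab
  obtain ⟨q, hq, hqlen⟩ := hr.exists_path_of_dist
  have hqs : ∀ z ∈ q.support, z ∈ s := fun z hz => q.mem_of_mem_support_restrict ha hz
  have hPc : (q.mapLe (restrict_le s)).IsChordless := by
    rw [isChordless_iff_forall_mem_edges, support_mapLe_eq_support, edges_mapLe_eq_edges]
    exact fun u w hu hw huw =>
      (q.isChordless_of_length_eq_dist hqlen).mem_edges hu hw ⟨hqs u hu, hqs w hw, huw⟩
  have hlen : 2 ≤ (q.mapLe (restrict_le s)).length := by
    rw [length_mapLe, hqlen]
    exact hr.one_lt_dist_of_ne_of_not_adj hab fun h => hnab h.2.2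
  obtain ⟨z, hz, hza, hzb, hxz⟩ := hG.exists_adj_of_isChordless ((isPath_mapLe _).mpr hq) hPc
    hlen (fun h => hxs (hqs x (support_mapLe_eq_support .. ▸ h))) hxa hxb
  rw [support_mapLe_eq_support] at hz
  exact (hs z (hqs z hz) hxz).elim hza hzb

/-- The attachments in `N(x)` of the component of `y` in `G[R]` separate it from `x`, and
chordality makes this separator a clique. -/
theorem isClique_attachment (hG : Chordal G) {x y : V} {R : Set V}
    (hR : ∀ z ∈ R, z ≠ x ∧ ¬ G.Adj x z) :
    G.IsClique {a | G.Adj x a ∧ ∃ c ∈ R, (G.restrict R).Reachable y c ∧ G.Adj c a} := by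
  rintro a ⟨hxa, ca, hca, hyca, hcaa⟩ b ⟨hxb, cb, hcb, hycb, hcbb⟩ hab
  have hRs : R ⊆ insert a (insert b R) := fun z hz => by simp [hz]
  refine hG.adj_of_reachable_restrict (s := insert a (insert b R)) hab hxa hxb ?_ ?_ (by simp) ?_
  · simp only [Set.mem_insert_iff, not_or]
    exact ⟨hxa.ne, hxb.ne, fun hx => (hR x hx).1 rfl⟩
  · rintro z (rfl | rfl | hz) hxz
    exacts [.inl rfl, .inr rfl, ((hR z hz).2 hxz).elim]
  · have hca' : (G.restrict (insert a (insert b R))).Adj a ca := ⟨by simp, hRs hca, hcaa.symm⟩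
    have hcb' : (G.restrict (insert a (insert b R))).Adj cb b := ⟨hRs hcb, by simp, hcbb⟩
    exact hca'.reachable.trans (((hyca.symm.trans hycb).mono (restrict_mono hRs)).trans
      hcb'.reachable)

/-- With `C` the component of `y` in `G[W \ N[x]]` and `S` its attachments in `N(x)`, a simplicial
vertex of `G[C ∪ S]` outside the clique `S` lies in `C`, so all its neighbours in `W` are in
`C ∪ S`. -/
theorem exists_isSimplicialIn_of_not_adj [DecidableEq V] (hG : Chordal G) {W : Finset V} {x y : V}
    (hxW : x ∈ W) (hyW : y ∈ W) (hxy : x ≠ y) (hnxy : ¬ G.Adj x y)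
    (ih : ∀ W' ⊂ W, ∀ {K : Finset V}, K ⊂ W' → G.IsClique (K : Set V) →
      ∃ v ∈ W' \ K, G.IsSimplicialIn W' v) :
    ∃ v ∈ W, v ≠ x ∧ ¬ G.Adj x v ∧ G.IsSimplicialIn W v := by
  classical
  set R : Set V := {z | z ∈ W ∧ z ≠ x ∧ ¬ G.Adj x z}
  set C := W.filter fun z => (G.restrict R).Reachable y z
  set S := W.filter fun a => G.Adj x a ∧ ∃ c ∈ R, (G.restrict R).Reachable y c ∧ G.Adj c a
  have hyR : y ∈ R := ⟨hyW, hxy.symm, hnxy⟩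
  have hCR : ∀ c ∈ C, c ∈ R := fun c hc => by
    obtain ⟨p⟩ := (mem_filter.mp hc).2
    exact p.mem_of_mem_support_restrict hyR p.end_mem_support
  have hyC : y ∈ C := mem_filter.mpr ⟨hyW, .rfl⟩
  have hW' : C ∪ S ⊂ W := by
    refine (ssubset_iff_of_subset (union_subset (filter_subset _ _) (filter_subset _ _))).mpr
      ⟨x, hxW, fun hx => ?_⟩
    rcases mem_union.mp hx with hx | hx
    · exact (hCR x hx).2.1 rfl
    · exact G.loopless.irrefl x (mem_filter.mp hx).2.1
  have hS : S ⊂ C ∪ S := (ssubset_iff_of_subset subset_union_right).mpr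
    ⟨y, mem_union_left _ hyC, fun hy => hnxy (mem_filter.mp hy).2.1⟩
  have hSclique : G.IsClique (S : Set V) := by
    refine (hG.isClique_attachment (y := y) (R := R) fun z hz => hz.2).subset fun a ha => ?_
    exact (mem_filter.mp ha).2
  obtain ⟨v, hv, hvs⟩ := ih _ hW' hS hSclique
  have hvC : v ∈ C := by
    rcases mem_sdiff.mp hv with ⟨hv, hvS⟩
    exact (mem_union.mp hv).resolve_right hvS
  have hvR := hCR v hvC
  have ⟨hvW, hvx, hxv⟩ := hvR
  have hyv := (mem_filter.mp hvC).2
  refine ⟨v, hvW, hvx, hxv, hvs.of_neighbors_subset fun w hwW hvw => ?_⟩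
  by_cases hwR : w ∈ R
  · exact mem_union_left _ (mem_filter.mpr ⟨hwW, hyv.trans (Adj.reachable ⟨hvR, hwR, hvw⟩)⟩)
  · have hxw : G.Adj x w := by
      by_contra hxw
      refine hwR ⟨hwW, ?_, hxw⟩
      rintro rfl
      exact hxv hvw.symm
    exact mem_union_right _ (mem_filter.mpr ⟨hwW, hxw, v, hvR, hyv, hvw⟩)

theorem exists_isSimplicialIn [DecidableEq V] (hG : Chordal G) {W K : Finset V} (hKW : K ⊂ W)
    (hK : G.IsClique (K : Set V)) : ∃ v ∈ W \ K, G.IsSimplicialIn W v := by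
  induction W using Finset.strongInduction generalizing K with
  | H W ih =>
  rcases K.eq_empty_or_nonempty with rfl | ⟨k, hk⟩
  · by_cases hW : G.IsClique (W : Set V)
    · obtain ⟨v, hv⟩ := empty_ssubset.mp hKW
      exact ⟨v, by simpa using hv, hW.subset Set.inter_subset_left⟩
    · obtain ⟨x, hx, y, hy, hxy, hnxy⟩ : ∃ x ∈ W, ∃ y ∈ W, x ≠ y ∧ ¬ G.Adj x y := by
        simpa [IsClique, Set.Pairwise] using hW
      obtain ⟨v, hvW, -, -, hv⟩ := hG.exists_isSimplicialIn_of_not_adj hx hy hxy hnxy ih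
      exact ⟨v, by simpa using hvW, hv⟩
  by_cases hku : ∀ y ∈ W, y ≠ k → G.Adj k y
  · -- `k` is universal in `W`, so it can be removed from both `W` and `K`
    obtain ⟨w, hwW, hwK⟩ := exists_of_ssubset hKW
    have hKW' : K.erase k ⊂ W.erase k :=
      (ssubset_iff_of_subset (erase_subset_erase k hKW.subset)).mpr
        ⟨w, mem_erase.mpr ⟨fun h => hwK (h ▸ hk), hwW⟩, fun h => hwK (mem_of_mem_erase h)⟩
    obtain ⟨v, hv, hvs⟩ := ih _ (erase_ssubset (hKW.subset hk)) hKW' (hK.subset (by simp))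
    obtain ⟨⟨hvk, hvW⟩, hvK⟩ : (v ≠ k ∧ v ∈ W) ∧ (v ≠ k → v ∉ K) := by simpa using hv
    refine ⟨v, mem_sdiff.mpr ⟨hvW, hvK hvk⟩, (hvs.insert (a := k) ?_).subset ?_⟩
    · exact fun b hb hkb => hku b (mem_of_mem_erase hb.1) (Ne.symm hkb)
    · rintro w ⟨hwW, hvw⟩
      by_cases hwk : w = k
      · exact .inl hwk
      · exact .inr ⟨mem_erase.mpr ⟨hwk, hwW⟩, hvw⟩
  · obtain ⟨y, hy, hyk, hnky⟩ : ∃ y ∈ W, y ≠ k ∧ ¬ G.Adj k y := by simpa using hku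
    obtain ⟨v, hvW, hvk, hnkv, hv⟩ :=
      hG.exists_isSimplicialIn_of_not_adj (hKW.subset hk) hy hyk.symm hnky ih
    exact ⟨v, mem_sdiff.mpr ⟨hvW, fun hvK => hnkv (hK hk hvK hvk.symm)⟩, hv⟩

end Chordal

namespace SimpleGraph

variable {V : Type} (G : SimpleGraph V) [DecidableRel G.Adj]

def indComplexOn (W : Finset V) : Finset (Finset V) :=
  W.powerset.filter fun A => ∀ a ∈ A, ∀ b ∈ A, ¬ G.Adj a b

variable {G} {W : Finset V}

theorem mem_indComplexOn {A : Finset V} :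
    A ∈ G.indComplexOn W ↔ A ⊆ W ∧ ∀ a ∈ A, ∀ b ∈ A, ¬ G.Adj a b := by
  simp [indComplexOn]

theorem indComplexOn_eq_powerset (h : ∀ a ∈ W, ∀ b ∈ W, ¬ G.Adj a b) :
    G.indComplexOn W = W.powerset :=
  filter_true_of_mem fun _ hA a ha b hb => h a (mem_powerset.mp hA ha) b (mem_powerset.mp hA hb)

variable [DecidableEq V]

theorem del_indComplexOn (u : V) : del (G.indComplexOn W) u = G.indComplexOn (W.erase u) := by
  ext A
  simp only [del, mem_filter, mem_indComplexOn, subset_erase]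
  tauto

theorem link_indComplexOn {u : V} (hu : u ∈ W) :
    link (G.indComplexOn W) {u} = G.indComplexOn (W.filter fun z => z ≠ u ∧ ¬ G.Adj u z) := by
  ext A
  simp only [link, mem_filter, mem_indComplexOn, disjoint_singleton_right, union_singleton,
    subset_iff, mem_insert, forall_eq_or_imp]
  constructor
  · rintro ⟨⟨hAW, hA⟩, huA, -, ⟨-, huA'⟩, -⟩
    exact ⟨fun z hz => ⟨hAW hz, fun h => huA (h ▸ hz), huA' z hz⟩, hA⟩
  · rintro ⟨hAW, hA⟩
    refine ⟨⟨fun z hz => (hAW hz).1, hA⟩, fun h => (hAW h).2.1 rfl, ⟨hu, fun z hz => (hAW hz).1⟩,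
      ⟨G.loopless.irrefl u, fun z hz => (hAW hz).2.2⟩, fun a ha => ⟨fun h => ?_, hA a ha⟩⟩
    exact (hAW ha).2.2 h.symm

/-- `v` can replace `u` in a face: the other vertices of the face are non-neighbours of `u`,
hence of `v`. -/
theorem exists_exchange_of_isSimplicialIn {u v : V} (hv : v ∈ W)
    (hvs : G.IsSimplicialIn W v) (huv : G.Adj u v) {A : Finset V} (hA : A ∈ G.indComplexOn W)
    (huA : u ∈ A) : ∃ w, w ≠ u ∧ w ∉ A ∧ insert w (A.erase u) ∈ G.indComplexOn W := by
  obtain ⟨hAW, hA⟩ := mem_indComplexOn.mp hA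
  have hv_indep : ∀ a ∈ A.erase u, ¬ G.Adj v a := fun a ha hva => by
    obtain ⟨hau, haA⟩ := mem_erase.mp ha
    exact hA a haA u huA (hvs ⟨hAW haA, hva⟩ ⟨hAW huA, huv.symm⟩ hau)
  refine ⟨v, huv.ne', fun hvA => hA u huA v hvA huv,
    mem_indComplexOn.mpr ⟨insert_subset hv ((erase_subset _ _).trans hAW), ?_⟩⟩
  simp only [mem_insert]
  rintro a (rfl | ha) b (rfl | hb)
  · exact G.loopless.irrefl _
  · exact hv_indep b hb
  · exact fun h => hv_indep a ha h.symm
  · exact hA a (mem_of_mem_erase ha) b (mem_of_mem_erase hb)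

end SimpleGraph

open SimpleGraph in
theorem Chordal.vertexDecomposable_indComplexOn {V : Type} [DecidableEq V] {G : SimpleGraph V}
    [DecidableRel G.Adj] (hG : Chordal G) (W : Finset V) :
    VertexDecomposable (G.indComplexOn W) := by
  induction W using Finset.strongInduction with
  | H W ih =>
  by_cases hW : ∀ a ∈ W, ∀ b ∈ W, ¬ G.Adj a b
  · rw [indComplexOn_eq_powerset hW]
    exact .simplex W
  obtain ⟨a, ha, b, hb, hab⟩ : ∃ a ∈ W, ∃ b ∈ W, G.Adj a b := by simpa using hW
  set W' := W.filter fun z => ∃ u ∈ W, G.Adj u z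
  obtain ⟨v, hv, hvs⟩ := hG.exists_isSimplicialIn (K := ∅) (W := W')
    (empty_ssubset.mpr ⟨b, mem_filter.mpr ⟨hb, a, ha, hab⟩⟩) (by simp)
  obtain ⟨hvW, u, huW, huv⟩ := mem_filter.mp (mem_sdiff.mp hv).1
  have hvsW : G.IsSimplicialIn W v :=
    hvs.of_neighbors_subset fun w hwW hvw => mem_filter.mpr ⟨hwW, v, hvW, hvw⟩
  refine .shed _ u (fun A hA huA => exists_exchange_of_isSimplicialIn hvW hvsW huv hA huA) ?_ ?_
  · rw [del_indComplexOn]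
    exact ih _ (erase_ssubset huW)
  · rw [link_indComplexOn huW]
    refine ih _ ((ssubset_iff_of_subset (filter_subset _ _)).mpr ⟨u, huW, fun hu => ?_⟩)
    exact (mem_filter.mp hu).2.1 rfl

/-- **The independence complex of a chordal graph is vertex-decomposable.** -/
theorem chordal_indComplex_vertexDecomposable (n : ℕ) (G : SimpleGraph (Fin n))
    [DecidableRel G.Adj] (hG : Chordal G) :
    VertexDecomposable (indComplex n G) := by
  -- not `rfl`: `indComplex` decides its filter predicate by quantifying over all of `Fin n`
  have h : indComplex n G = G.indComplexOn Finset.univ := by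
    ext A
    simp [indComplex, SimpleGraph.mem_indComplexOn]
  exact h ▸ hG.vertexDecomposable_indComplexOn Finset.univ
end

section
/- Let G be a graph with r connected components. Then the (r−1)-dimensional skeleton of the independence complex of G is vertex-decomposable; consequently depth(Ind(G)) ≥ r − 1. -/
open Finset

/-- The dimension of a simplicial complex, as an integer (`-1` for `{∅}`). -/
def dimC {α : Type} (Δ : Finset (Finset α)) : ℤ := ((Δ.sup Finset.card : ℕ) : ℤ) - 1

/-- The simplicial boundary of a basis element: `∂A = ∑_{a ∈ A} (-1)^{pos(a)} (A \ {a})`,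
where `pos(a)` is the position of `a` in the increasing ordering of `A`. -/
noncomputable def bdElt {α : Type} [LinearOrder α] (F : Type) [Field F]
    (A : Finset α) : Finset α →₀ F :=
  ∑ a ∈ A, ((-1 : F) ^ (A.filter (· < a)).card) • Finsupp.single (A.erase a) (1 : F)

/-- The boundary operator on (augmented) simplicial chains, where the chain in
cardinality `k` is spanned by the `k`-element sets (in particular the empty set
spans the augmentation degree). -/
noncomputable def bd {α : Type} [LinearOrder α] (F : Type) [Field F] :
    (Finset α →₀ F) →ₗ[F] (Finset α →₀ F) :=
  Finsupp.lsum F fun A => LinearMap.toSpanSingleton F (Finset α →₀ F) (bdElt F A)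

/-- Vanishing of the reduced simplicial homology `H̃_i(Δ; F)`: every reduced
cycle supported on `(i+1)`-element faces of `Δ` is the boundary of a chain
supported on `(i+2)`-element faces of `Δ`. -/
def HomologyVanishes {α : Type} [LinearOrder α] (F : Type) [Field F]
    (Δ : Finset (Finset α)) (i : ℤ) : Prop :=
  ∀ x : Finset α →₀ F, (∀ A ∈ x.support, A ∈ Δ ∧ (A.card : ℤ) = i + 1) →
    bd F x = 0 →
    ∃ y : Finset α →₀ F, (∀ A ∈ y.support, A ∈ Δ ∧ (A.card : ℤ) = i + 2) ∧
      bd F y = x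

/-- `Δ` is Cohen–Macaulay over `F`: for every face `A` and every
`i < dim link(Δ, A)`, the reduced homology `H̃_i(link(Δ,A); F)` vanishes. -/
def IsCM {α : Type} [LinearOrder α] (F : Type) [Field F]
    (Δ : Finset (Finset α)) : Prop :=
  ∀ A ∈ Δ, ∀ i : ℤ, i < dimC (link Δ A) → HomologyVanishes F (link Δ A) i

/-- The `d`-dimensional skeleton of `Δ`: all faces of dimension at most `d`. -/
def skeleton {α : Type} (Δ : Finset (Finset α)) (d : ℤ) : Finset (Finset α) :=
  Δ.filter fun A => (A.card : ℤ) ≤ d + 1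

/-- The depth of `Δ` over `F`: the largest `d` such that the `d`-dimensional
skeleton of `Δ` is Cohen–Macaulay over `F`. -/
noncomputable def depthC {α : Type} [LinearOrder α] (F : Type) [Field F]
    (Δ : Finset (Finset α)) : ℤ :=
  sSup {d : ℤ | d ≤ dimC Δ ∧ IsCM F (skeleton Δ d)}

/-!
A vertex-decomposable complex that is pure of dimension `m - 1` has vanishing reduced homology
below dimension `m - 1`: a simplex is a cone, and for a shedding vertex `v` a cycle splits into a
part avoiding `v`, which lives in the deletion, and the cone over a cycle of the link, so the
Mayer–Vietoris argument goes through by induction.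

For the independence complex, let `c(V)` be the number of connected components of the subgraph
induced on `V`. The complex of independent subsets of `V` with at most `k ≤ c(V)` elements is
pure of dimension `k - 1`, since an independent set with fewer than `c(V)` elements misses the
closed neighbourhood of a whole component and can be enlarged there. It is vertex-decomposable
by induction on `V`: shed any vertex if `k < c(V)`, a non-isolated vertex if `k = c(V)` and `V`
spans an edge, and otherwise the complex is the simplex on `V`; deleting `v` or its closed
neighbourhood lowers `c(V)` by at most one, and not at all when `v` is not isolated. Links of
faces are again such complexes, which gives the Cohen–Macaulay property of the skeleton.
-/

section Chains

variable {α : Type} [LinearOrder α] (F : Type) [Field F]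

lemma bd_single (A : Finset α) : bd F (Finsupp.single A (1 : F)) = bdElt F A := by
  rw [bd, Finsupp.lsum_single, LinearMap.toSpanSingleton_apply, one_smul]

lemma exists_of_mem_support_bd (x : Finset α →₀ F) {A : Finset α}
    (hA : A ∈ (bd F x).support) : ∃ B ∈ x.support, ∃ b ∈ B, A = B.erase b := by
  obtain ⟨B, hB, hAB⟩ := Finset.mem_biUnion.mp (Finsupp.support_sum hA)
  obtain ⟨b, hb, hAb⟩ :=
    Finset.mem_biUnion.mp (Finsupp.support_finsetSum (Finsupp.support_smul hAB))
  exact ⟨B, hB, b, hb, by simpa using Finsupp.support_single_subset (Finsupp.support_smul hAb)⟩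

lemma bd_apply_eq_zero_of_mem {v : α} {z : Finset α →₀ F} (hz : ∀ A, v ∈ A → z A = 0)
    {A : Finset α} (hvA : v ∈ A) : bd F z A = 0 := by
  by_contra h
  obtain ⟨B, hB, b, -, rfl⟩ := exists_of_mem_support_bd F z (Finsupp.mem_support_iff.mpr h)
  exact Finsupp.mem_support_iff.mp hB (hz B (Finset.mem_of_mem_erase hvA))

noncomputable def coneElt (v : α) (B : Finset α) : Finset α →₀ F :=
  if v ∈ B then 0
  else ((-1 : F) ^ (B.filter (· < v)).card) • Finsupp.single (insert v B) (1 : F)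

noncomputable def cone (v : α) : (Finset α →₀ F) →ₗ[F] (Finset α →₀ F) :=
  Finsupp.lsum F fun B => LinearMap.toSpanSingleton F (Finset α →₀ F) (coneElt F v B)

lemma cone_single (v : α) (B : Finset α) (c : F) :
    cone F v (Finsupp.single B c) = c • coneElt F v B := by
  rw [cone, Finsupp.lsum_single, LinearMap.toSpanSingleton_apply]

lemma cone_apply (v : α) (x : Finset α →₀ F) (A : Finset α) :
    cone F v x A =
      if v ∈ A then (-1 : F) ^ ((A.erase v).filter (· < v)).card * x (A.erase v) else 0 := by
  induction x using Finsupp.induction_linear with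
  | zero => simp
  | add f g hf hg =>
    simp only [map_add, Finsupp.add_apply, hf, hg]
    split <;> ring
  | single B c =>
    rw [cone_single, coneElt]
    by_cases hvB : v ∈ B
    · have hne : B ≠ A.erase v := fun h => Finset.notMem_erase v A (h ▸ hvB)
      simp [hvB, hne]
    by_cases hA : insert v B = A
    · subst hA
      simp [hvB, mul_comm]
    · rw [if_neg hvB, Finsupp.smul_apply, Finsupp.smul_apply, Finsupp.single_apply, if_neg hA]
      split_ifs with hvA
      · have hne : B ≠ A.erase v := fun h => hA (h ▸ Finset.insert_erase hvA)
        simp [hne]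
      · simp

lemma mem_support_cone (v : α) (x : Finset α →₀ F) {A : Finset α}
    (hA : A ∈ (cone F v x).support) : v ∈ A ∧ A.erase v ∈ x.support := by
  rw [Finsupp.mem_support_iff, cone_apply] at hA
  split_ifs at hA with hv
  · exact ⟨hv, Finsupp.mem_support_iff.mpr (right_ne_zero_of_mul hA)⟩
  · exact absurd rfl hA

lemma cone_apply_insert {v : α} {B : Finset α} (hvB : v ∉ B) (x : Finset α →₀ F) :
    cone F v x (insert v B) = (-1 : F) ^ (B.filter (· < v)).card * x B := by
  rw [cone_apply, if_pos (Finset.mem_insert_self v B), Finset.erase_insert hvB]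

noncomputable def delinkElt (v : α) (B : Finset α) : Finset α →₀ F :=
  if v ∈ B then
    ((-1 : F) ^ ((B.erase v).filter (· < v)).card) • Finsupp.single (B.erase v) (1 : F)
  else 0

/-- Inverse of `cone F v`, from chains on faces containing `v` to chains on faces avoiding
it. -/
noncomputable def delink (v : α) : (Finset α →₀ F) →ₗ[F] (Finset α →₀ F) :=
  Finsupp.lsum F fun B => LinearMap.toSpanSingleton F (Finset α →₀ F) (delinkElt F v B)

lemma delink_single (v : α) (B : Finset α) (c : F) :
    delink F v (Finsupp.single B c) = c • delinkElt F v B := by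
  rw [delink, Finsupp.lsum_single, LinearMap.toSpanSingleton_apply]

lemma delink_apply (v : α) (x : Finset α →₀ F) (B : Finset α) :
    delink F v x B =
      if v ∈ B then 0 else (-1 : F) ^ (B.filter (· < v)).card * x (insert v B) := by
  induction x using Finsupp.induction_linear with
  | zero => simp
  | add f g hf hg =>
    simp only [map_add, Finsupp.add_apply, hf, hg]
    split <;> ring
  | single C c =>
    rw [delink_single, delinkElt]
    by_cases hvC : v ∉ C
    · have hne : C ≠ insert v B := fun h => hvC (h ▸ Finset.mem_insert_self v B)
      simp [hvC, hne]
    by_cases hB : C.erase v = B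
    · subst hB
      simp [not_not.mp hvC, mul_comm]
    · rw [if_pos (not_not.mp hvC), Finsupp.smul_apply, Finsupp.smul_apply,
        Finsupp.single_apply, if_neg hB]
      split_ifs with hvB
      · simp
      · have hne : C ≠ insert v B := fun h => hB (h ▸ Finset.erase_insert hvB)
        simp [hne]

lemma filter_add_cone_delink (v : α) (x : Finset α →₀ F) :
    x.filter (fun A => v ∉ A) + cone F v (delink F v x) = x := by
  ext A
  rw [Finsupp.add_apply, Finsupp.filter_apply, cone_apply]
  by_cases hvA : v ∈ A
  · rw [if_neg (not_not_intro hvA), if_pos hvA, delink_apply, if_neg (Finset.notMem_erase v A),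
      Finset.insert_erase hvA, zero_add, ← mul_assoc, ← pow_add, Even.neg_one_pow ⟨_, rfl⟩,
      one_mul]
  · rw [if_pos hvA, if_neg hvA, add_zero]

lemma cone_bdElt_of_mem {v : α} {B : Finset α} (hv : v ∈ B) :
    cone F v (bdElt F B) = Finsupp.single B (1 : F) := by
  rw [bdElt, map_sum, Finset.sum_eq_single_of_mem v hv]
  · have hs : ((B.erase v).filter (· < v)).card = (B.filter (· < v)).card := by
      rw [Finset.filter_erase, Finset.erase_eq_of_notMem (by simp)]
    rw [map_smul, cone_single, one_smul, coneElt, if_neg (Finset.notMem_erase v B), smul_smul,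
      ← pow_add, hs, Even.neg_one_pow ⟨_, rfl⟩, one_smul, Finset.insert_erase hv]
  · intro a ha hne
    rw [map_smul, cone_single, one_smul, coneElt,
      if_pos (Finset.mem_erase.mpr ⟨Ne.symm hne, hv⟩), smul_zero]

/-- Removing `a` and adding `v` in either order gives opposite signs. -/
lemma neg_one_pow_erase_insert {v a : α} {B : Finset α} (hv : v ∉ B) (ha : a ∈ B) :
    (-1 : F) ^ ((B.filter (· < v)).card + ((insert v B).filter (· < a)).card) =
      -(-1 : F) ^ ((B.filter (· < a)).card + ((B.erase a).filter (· < v)).card) := by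
  have hva : v ≠ a := fun h => hv (h ▸ ha)
  rcases hva.lt_or_gt with hlt | hgt
  · have hq : ((insert v B).filter (· < a)).card = (B.filter (· < a)).card + 1 := by
      rw [Finset.filter_insert, if_pos hlt, Finset.card_insert_of_notMem]
      exact fun h => hv (Finset.mem_of_mem_filter v h)
    have hs : (B.erase a).filter (· < v) = B.filter (· < v) := by
      rw [Finset.filter_erase, Finset.erase_eq_of_notMem]
      exact fun h => (Finset.mem_filter.mp h).2.not_gt hlt
    rw [hq, hs, ← add_assoc, add_comm (Finset.card _), pow_succ]
    ring
  · have hq : ((insert v B).filter (· < a)).card = (B.filter (· < a)).card := by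
      rw [Finset.filter_insert, if_neg hgt.not_gt]
    have hmem : a ∈ B.filter (· < v) := Finset.mem_filter.mpr ⟨ha, hgt⟩
    have hs : ((B.erase a).filter (· < v)).card + 1 = (B.filter (· < v)).card := by
      rw [Finset.filter_erase, Finset.card_erase_add_one hmem]
    rw [hq, ← hs, add_comm, ← add_assoc, pow_succ]
    ring

lemma bd_coneElt_add_cone_bdElt {v : α} {B : Finset α} (hv : v ∉ B) :
    bd F (coneElt F v B) + cone F v (bdElt F B) = Finsupp.single B (1 : F) := by
  have hbd : bd F (coneElt F v B) = Finsupp.single B (1 : F) +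
      ∑ a ∈ B, (-1 : F) ^ ((B.filter (· < v)).card + ((insert v B).filter (· < a)).card) •
        Finsupp.single (insert v (B.erase a)) (1 : F) := by
    rw [coneElt, if_neg hv, map_smul, bd_single, bdElt, Finset.sum_insert hv, smul_add,
      Finset.smul_sum, Finset.filter_insert, if_neg (lt_irrefl v), Finset.erase_insert hv,
      smul_smul, ← pow_add, Even.neg_one_pow ⟨_, rfl⟩, one_smul]
    congr 1
    refine Finset.sum_congr rfl fun a ha => ?_
    rw [smul_smul, ← pow_add, Finset.erase_insert_of_ne (ne_of_mem_of_not_mem ha hv).symm]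
  have hcone : cone F v (bdElt F B) =
      ∑ a ∈ B, (-1 : F) ^ ((B.filter (· < a)).card + ((B.erase a).filter (· < v)).card) •
        Finsupp.single (insert v (B.erase a)) (1 : F) := by
    rw [bdElt, map_sum]
    refine Finset.sum_congr rfl fun a ha => ?_
    rw [map_smul, cone_single, one_smul, coneElt,
      if_neg fun h => hv (Finset.mem_of_mem_erase h), smul_smul, ← pow_add]
  rw [hbd, hcone, add_assoc, ← Finset.sum_add_distrib, add_eq_left]
  refine Finset.sum_eq_zero fun a ha => ?_
  rw [← add_smul, neg_one_pow_erase_insert F hv ha, neg_add_cancel, zero_smul]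

lemma bd_cone_add_cone_bd (v : α) (x : Finset α →₀ F) :
    bd F (cone F v x) + cone F v (bd F x) = x := by
  induction x using Finsupp.induction_linear with
  | zero => simp
  | add f g hf hg => rw [map_add, map_add, map_add, map_add, add_add_add_comm, hf, hg]
  | single B c =>
    rw [← mul_one c, ← smul_eq_mul, ← Finsupp.smul_single, map_smul, map_smul, map_smul,
      map_smul, ← smul_add, cone_single, one_smul, bd_single]
    by_cases hv : v ∈ B
    · rw [coneElt, if_pos hv, map_zero, zero_add, cone_bdElt_of_mem F hv]
    · rw [bd_coneElt_add_cone_bdElt F hv]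

lemma bd_cone (v : α) (x : Finset α →₀ F) : bd F (cone F v x) = x - cone F v (bd F x) :=
  eq_sub_of_add_eq (bd_cone_add_cone_bd F v x)

lemma bd_delink_eq_zero_of_bd_eq_zero (v : α) {x : Finset α →₀ F} (hx : bd F x = 0) :
    bd F (delink F v x) = 0 ∧ bd F (x.filter (fun A => v ∉ A)) + delink F v x = 0 := by
  set c := x.filter (fun A => v ∉ A)
  set w := delink F v x
  have hc : ∀ A, v ∈ A → c A = 0 := fun A hvA => by simp [c, hvA]
  have hw : ∀ A, v ∈ A → w A = 0 := fun A hvA => by simp [w, delink_apply, hvA]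
  have hsplit : bd F c + w - cone F v (bd F w) = 0 := by
    rw [add_sub_assoc, ← bd_cone, ← map_add, filter_add_cone_delink, hx]
  have hbdw : bd F w = 0 := by
    ext B
    by_cases hvB : v ∈ B
    · exact bd_apply_eq_zero_of_mem F hw hvB
    have h := congrArg (· (insert v B)) hsplit
    simp only [Finsupp.sub_apply, Finsupp.add_apply, Finsupp.coe_zero, Pi.zero_apply] at h
    rw [bd_apply_eq_zero_of_mem F hc (Finset.mem_insert_self v B),
      hw _ (Finset.mem_insert_self v B), cone_apply_insert F hvB, zero_add, zero_sub,
      neg_eq_zero] at h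
    exact (mul_eq_zero.mp h).resolve_left (pow_ne_zero _ (neg_ne_zero.mpr one_ne_zero))
  rw [hbdw, map_zero, sub_zero] at hsplit
  exact ⟨hbdw, hsplit⟩

end Chains

section Complexes

variable {α : Type}

/-- The exchange condition on `v` in the definition of `VertexDecomposable`. -/
def IsShedding [DecidableEq α] (Δ : Finset (Finset α)) (v : α) : Prop :=
  ∀ A ∈ Δ, v ∈ A → ∃ w, w ≠ v ∧ w ∉ A ∧ insert w (A.erase v) ∈ Δ

def IsPure (m : ℕ) (Δ : Finset (Finset α)) : Prop :=
  ∀ A ∈ Δ, A.card ≤ m ∧ ∃ B ∈ Δ, A ⊆ B ∧ B.card = m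

lemma IsPure.dimC_eq {m : ℕ} {Δ : Finset (Finset α)} (hpure : IsPure m Δ) (hne : Δ.Nonempty) :
    dimC Δ = (m : ℤ) - 1 := by
  obtain ⟨A, hA⟩ := hne
  obtain ⟨-, B, hB, -, hBcard⟩ := hpure A hA
  rw [dimC, le_antisymm (Finset.sup_le fun C hC => (hpure C hC).1)
    (hBcard ▸ Finset.le_sup (f := Finset.card) hB)]

lemma dimC_mono {Δ Δ' : Finset (Finset α)} (h : Δ ⊆ Δ') : dimC Δ ≤ dimC Δ' := by
  simp only [dimC, sub_le_sub_iff_right, Nat.cast_le]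
  exact Finset.sup_mono h

variable [DecidableEq α]

lemma mem_link_singleton {Δ : Finset (Finset α)} {v : α} {A : Finset α} :
    A ∈ link Δ {v} ↔ A ∈ Δ ∧ v ∉ A ∧ insert v A ∈ Δ := by
  rw [link, Finset.mem_filter, Finset.disjoint_singleton_right, Finset.union_singleton]

lemma mem_del {Δ : Finset (Finset α)} {v : α} {A : Finset α} :
    A ∈ del Δ v ↔ A ∈ Δ ∧ v ∉ A :=
  Finset.mem_filter

lemma VertexDecomposable.isComplex {Δ : Finset (Finset α)} (h : VertexDecomposable Δ) :
    IsComplex Δ := by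
  induction h with
  | simplex A =>
    exact ⟨⟨∅, Finset.empty_mem_powerset A⟩, fun X hX B hB =>
      Finset.mem_powerset.mpr (hB.trans (Finset.mem_powerset.mp hX))⟩
  | shed Δ v hshed _ _ ihdel ihlink =>
    have herase : ∀ A ∈ Δ, A.erase v ∈ del Δ v := by
      intro A hA
      by_cases hv : v ∈ A
      · obtain ⟨w, hwv, -, hw⟩ := hshed A hA hv
        refine ihdel.2 _ (mem_del.mpr ⟨hw, ?_⟩) _ (Finset.subset_insert _ _)
        simp [Ne.symm hwv]
      · rw [Finset.erase_eq_of_notMem hv]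
        exact mem_del.mpr ⟨hA, hv⟩
    refine ⟨ihdel.1.mono (Finset.filter_subset _ _), fun A hA B hB => ?_⟩
    by_cases hvB : v ∈ B
    · have hlink : A.erase v ∈ link Δ {v} := mem_link_singleton.mpr
        ⟨(mem_del.mp (herase A hA)).1, Finset.notMem_erase v A,
          by rwa [Finset.insert_erase (hB hvB)]⟩
      have h := (mem_link_singleton.mp (ihlink.2 _ hlink _ (Finset.erase_subset_erase v hB))).2.2
      rwa [Finset.insert_erase hvB] at h
    · exact (mem_del.mp (ihdel.2 _ (herase A hA) _ (Finset.subset_erase.mpr ⟨hB, hvB⟩))).1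

lemma IsPure.del {m : ℕ} {Δ : Finset (Finset α)} {v : α} (hpure : IsPure m Δ)
    (hshed : IsShedding Δ v) : IsPure m (del Δ v) := by
  intro A hA
  obtain ⟨hAΔ, hvA⟩ := mem_del.mp hA
  obtain ⟨hcard, B, hB, hAB, hBcard⟩ := hpure A hAΔ
  refine ⟨hcard, ?_⟩
  by_cases hvB : v ∈ B
  · obtain ⟨w, hwv, hwB, hw⟩ := hshed B hB hvB
    refine ⟨insert w (B.erase v), mem_del.mpr ⟨hw, by simp [Ne.symm hwv]⟩,
      (Finset.subset_erase.mpr ⟨hAB, hvA⟩).trans (Finset.subset_insert _ _), ?_⟩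
    rw [Finset.card_insert_of_notMem fun h => hwB (Finset.mem_of_mem_erase h),
      Finset.card_erase_add_one hvB, hBcard]
  · exact ⟨B, mem_del.mpr ⟨hB, hvB⟩, hAB, hBcard⟩

lemma IsPure.link {m : ℕ} {Δ : Finset (Finset α)} {v : α} (hpure : IsPure m Δ)
    (hΔ : ∀ A ∈ Δ, ∀ B ⊆ A, B ∈ Δ) : IsPure (m - 1) (link Δ {v}) := by
  intro A hA
  obtain ⟨-, hvA, hvAΔ⟩ := mem_link_singleton.mp hA
  obtain ⟨hcard, B, hB, hAB, hBcard⟩ := hpure _ hvAΔ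
  have hvB : v ∈ B := hAB (Finset.mem_insert_self v A)
  rw [Finset.card_insert_of_notMem hvA] at hcard
  refine ⟨by omega, B.erase v, ?_,
    Finset.subset_erase.mpr ⟨(Finset.subset_insert v A).trans hAB, hvA⟩,
    by rw [Finset.card_erase_of_mem hvB, hBcard]⟩
  exact mem_link_singleton.mpr ⟨hΔ B hB _ (Finset.erase_subset v B), Finset.notMem_erase v B,
    by rwa [Finset.insert_erase hvB]⟩

end Complexes

section Homology

variable {α : Type} [LinearOrder α] (F : Type) [Field F]

lemma homologyVanishes_of_lt_neg_one (Δ : Finset (Finset α)) {i : ℤ} (hi : i < -1) :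
    HomologyVanishes F Δ i := by
  intro x hx _
  have hx0 : x = 0 := by
    rw [← Finsupp.support_eq_empty, Finset.eq_empty_iff_forall_notMem]
    intro A hA
    have := (hx A hA).2
    omega
  exact ⟨0, by simp, by rw [map_zero, hx0]⟩

lemma homologyVanishes_powerset {A : Finset α} (hA : A.Nonempty) (i : ℤ) :
    HomologyVanishes F A.powerset i := by
  intro x hx hbd
  obtain ⟨a, ha⟩ := hA
  have hsplit := (bd_delink_eq_zero_of_bd_eq_zero F a hbd).2
  refine ⟨cone F a (x.filter fun B => a ∉ B), fun B hB => ?_, ?_⟩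
  · obtain ⟨haB, hB'⟩ := mem_support_cone F a _ hB
    rw [Finsupp.support_filter, Finset.mem_filter] at hB'
    obtain ⟨hsub, hcard⟩ := hx _ hB'.1
    rw [← Finset.insert_erase haB, Finset.mem_powerset, Finset.insert_subset_iff]
    refine ⟨⟨ha, Finset.mem_powerset.mp hsub⟩, ?_⟩
    rw [Finset.card_insert_of_notMem (Finset.notMem_erase a B)]
    push_cast
    omega
  · rw [bd_cone, eq_neg_of_add_eq_zero_left hsplit, map_neg, sub_neg_eq_add,
      filter_add_cone_delink]

/-- Mayer–Vietoris for the deletion and the link of `v`: a cycle of `Δ` minus the cone over a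
filling of its `v`-part in the link is a cycle of the deletion. -/
lemma homologyVanishes_of_del_link {Δ : Finset (Finset α)}
    (hΔ : ∀ A ∈ Δ, ∀ B ⊆ A, B ∈ Δ) {v : α} {i : ℤ}
    (hdel : HomologyVanishes F (del Δ v) i)
    (hlink : HomologyVanishes F (link Δ {v}) (i - 1)) : HomologyVanishes F Δ i := by
  intro x hx hbd
  obtain ⟨hbdw, hsplit⟩ := bd_delink_eq_zero_of_bd_eq_zero F v hbd
  set w := delink F v x
  set c := x.filter fun A => v ∉ A
  have hw : ∀ B ∈ w.support, B ∈ link Δ {v} ∧ (B.card : ℤ) = i - 1 + 1 := by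
    intro B hB
    rw [Finsupp.mem_support_iff, delink_apply] at hB
    split_ifs at hB with hvB
    · exact absurd rfl hB
    obtain ⟨hmem, hcard⟩ := hx _ (Finsupp.mem_support_iff.mpr (right_ne_zero_of_mul hB))
    rw [Finset.card_insert_of_notMem hvB] at hcard
    exact ⟨mem_link_singleton.mpr ⟨hΔ _ hmem B (Finset.subset_insert v B), hvB, hmem⟩,
      by push_cast at hcard; omega⟩
  obtain ⟨u, hu, hbdu⟩ := hlink w hw hbdw
  have hcu : ∀ A ∈ (c + u).support, A ∈ del Δ v ∧ (A.card : ℤ) = i + 1 := by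
    intro A hA
    rcases Finset.mem_union.mp (Finsupp.support_add hA) with hA | hA
    · rw [Finsupp.support_filter, Finset.mem_filter] at hA
      exact ⟨mem_del.mpr ⟨(hx A hA.1).1, hA.2⟩, (hx A hA.1).2⟩
    · obtain ⟨hlinkA, hcard⟩ := hu A hA
      obtain ⟨hAΔ, hvA, -⟩ := mem_link_singleton.mp hlinkA
      exact ⟨mem_del.mpr ⟨hAΔ, hvA⟩, by omega⟩
  obtain ⟨y, hy, hbdy⟩ := hdel (c + u) hcu (by rw [map_add, hbdu, hsplit])
  refine ⟨y - cone F v u, fun A hA => ?_, ?_⟩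
  · rcases Finset.mem_union.mp (Finsupp.support_sub hA) with hA | hA
    · exact ⟨(mem_del.mp (hy A hA).1).1, (hy A hA).2⟩
    · obtain ⟨hvA, hAu⟩ := mem_support_cone F v u hA
      obtain ⟨hlinkA, hcard⟩ := hu _ hAu
      have hAΔ := (mem_link_singleton.mp hlinkA).2.2
      rw [Finset.insert_erase hvA] at hAΔ
      rw [← Finset.card_erase_add_one hvA]
      exact ⟨hAΔ, by push_cast; omega⟩
  · rw [map_sub, hbdy, bd_cone, hbdu, show c + u - (u - cone F v w) = c + cone F v w by abel,
      filter_add_cone_delink]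

theorem VertexDecomposable.homologyVanishes {Δ : Finset (Finset α)} (h : VertexDecomposable Δ)
    {m : ℕ} (hpure : IsPure m Δ) {i : ℤ} (hi : i < (m : ℤ) - 1) :
    HomologyVanishes F Δ i := by
  induction h generalizing m i with
  | simplex A =>
    rcases A.eq_empty_or_nonempty with rfl | hA
    · obtain ⟨-, B, hB, -, hBcard⟩ := hpure ∅ (Finset.empty_mem_powerset ∅)
      rw [Finset.mem_powerset, Finset.subset_empty] at hB
      subst hB
      exact homologyVanishes_of_lt_neg_one F _ (by simp at hBcard; omega)
    · exact homologyVanishes_powerset F hA i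
  | shed Δ v hshed hdel hlink ihdel ihlink =>
    have hΔ := (VertexDecomposable.shed Δ v hshed hdel hlink).isComplex.2
    rcases lt_or_ge i (-1) with hi' | hi'
    · exact homologyVanishes_of_lt_neg_one F Δ hi'
    exact homologyVanishes_of_del_link F hΔ (ihdel (hpure.del hshed) hi)
      (ihlink (hpure.link hΔ) (by omega))

theorem isCM_of_forall_link {Δ : Finset (Finset α)}
    (h : ∀ A ∈ Δ, ∃ m, VertexDecomposable (link Δ A) ∧ IsPure m (link Δ A)) :
    IsCM F Δ := by
  intro A hA i hi
  obtain ⟨m, hvd, hpure⟩ := h A hA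
  rw [hpure.dimC_eq hvd.isComplex.1] at hi
  exact hvd.homologyVanishes F hpure hi

lemma le_depthC {Δ : Finset (Finset α)} {d : ℤ} (hd : d ≤ dimC Δ)
    (hCM : IsCM F (skeleton Δ d)) :
    d ≤ depthC F Δ :=
  le_csSup ⟨dimC Δ, fun _ h => h.1⟩ ⟨hd, hCM⟩

end Homology

section Components

variable {α : Type} (G : SimpleGraph α)

noncomputable def compCount (V : Finset α) : ℕ :=
  Nat.card (G.induce (V : Set α)).ConnectedComponent

def inducedComp (V : Finset α) (x : α) (hx : x ∈ V) :
    (G.induce (V : Set α)).ConnectedComponent :=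
  (G.induce (V : Set α)).connectedComponentMk ⟨x, hx⟩

variable {G}

lemma inducedComp_eq_of_adj {V : Finset α} {x y : α} (hx : x ∈ V) (hy : y ∈ V)
    (h : G.Adj x y) : inducedComp G V x hx = inducedComp G V y hy :=
  SimpleGraph.ConnectedComponent.eq.mpr (SimpleGraph.Adj.reachable (G := G.induce _) h)

lemma exists_inducedComp_avoiding {V S : Finset α} (hS : S ⊆ V)
    (hcard : S.card < compCount G V) :
    ∃ w, ∃ hw : w ∈ V, ∀ x (hx : x ∈ V), inducedComp G V x hx = inducedComp G V w hw →
      x ∉ S ∧ ∀ s ∈ S, ¬ G.Adj s x := by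
  by_contra! hcon
  have hsurj : Function.Surjective fun s : S => inducedComp G V s (hS s.2) := by
    intro K
    obtain ⟨⟨w, hw⟩, rfl⟩ := K.exists_rep
    obtain ⟨x, hx, hxw, hxS⟩ := hcon w hw
    by_cases hxS' : x ∈ S
    · exact ⟨⟨x, hxS'⟩, hxw⟩
    · obtain ⟨s, hs, hsx⟩ := hxS hxS'
      exact ⟨⟨s, hs⟩, (inducedComp_eq_of_adj _ hx hsx).trans hxw⟩
  have := Nat.card_le_card_of_surjective _ hsurj
  rw [Nat.card_eq_finsetCard] at this
  exact absurd hcard (not_lt.mpr this)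

lemma compCount_le_add_card [DecidableEq α] {V W A : Finset α} (hW : W ⊆ V) (hA : A ⊆ V)
    (hcover : ∀ x ∈ V, x ∉ W ∪ A → ∃ y ∈ W ∪ A, G.Adj x y) :
    compCount G V ≤ compCount G W + A.card := by
  let f : (G.induce (W : Set α)).ConnectedComponent ⊕ A →
      (G.induce (V : Set α)).ConnectedComponent
    | .inl K => K.map (G.induceHomOfLE (Finset.coe_subset.mpr hW)).toHom
    | .inr a => inducedComp G V a (hA a.2)
  have hrange : ∀ y (hy : y ∈ W ∪ A), inducedComp G V y (Finset.union_subset hW hA hy) ∈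
      Set.range f := by
    intro y hy
    rcases Finset.mem_union.mp hy with hyW | hyA
    · exact ⟨.inl (inducedComp G W y hyW), rfl⟩
    · exact ⟨.inr ⟨y, hyA⟩, rfl⟩
  have hsurj : Function.Surjective f := by
    refine SimpleGraph.ConnectedComponent.ind fun ⟨x, hx⟩ => ?_
    change inducedComp G V x hx ∈ Set.range f
    by_cases hxWA : x ∈ W ∪ A
    · exact hrange x hxWA
    · obtain ⟨y, hy, hxy⟩ := hcover x hx hxWA
      rw [inducedComp_eq_of_adj hx _ hxy]
      exact hrange y hy
  have := Nat.card_le_card_of_surjective f hsurj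
  rwa [Nat.card_sum, Nat.card_eq_finsetCard] at this

lemma compCount_le_compCount_erase_add_one [DecidableEq α] {V : Finset α} {v : α}
    (hv : v ∈ V) : compCount G V ≤ compCount G (V.erase v) + 1 :=
  compCount_le_add_card (Finset.erase_subset v V) (Finset.singleton_subset_iff.mpr hv)
    fun x hx hx' => absurd (by rwa [Finset.erase_union_eq v V hv]) hx'

lemma compCount_le_compCount_erase_of_adj [DecidableEq α] {V : Finset α} {u v : α}
    (hu : u ∈ V) (hvu : G.Adj v u) : compCount G V ≤ compCount G (V.erase v) := by
  refine compCount_le_add_card (A := ∅) (Finset.erase_subset v V) (Finset.empty_subset V)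
    fun x hx hx' => ⟨u, ?_, ?_⟩
  · exact Finset.mem_union_left _ (Finset.mem_erase.mpr ⟨G.ne_of_adj hvu.symm, hu⟩)
  · obtain rfl : x = v := by simpa [hx] using hx'
    exact hvu

lemma card_le_compCount {V : Finset α} (hV : G.IsIndepSet (V : Set α)) :
    V.card ≤ compCount G V := by
  rw [← Nat.card_eq_finsetCard]
  refine Nat.card_le_card_of_injective (fun x : V => inducedComp G V x x.2) fun x y hxy => ?_
  have hbot : G.induce (V : Set α) ≤ ⊥ := fun a b h => hV a.2 b.2 (G.ne_of_adj h) h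
  exact SimpleGraph.reachable_bot.mp ((SimpleGraph.ConnectedComponent.exact hxy).mono hbot)

lemma compCount_univ [Fintype α] : compCount G Finset.univ = Nat.card G.ConnectedComponent := by
  rw [compCount, Finset.coe_univ]
  exact Nat.card_congr G.induceUnivIso.connectedComponentEquiv

end Components

section IndependentSets

variable {α : Type} [DecidableEq α] (G : SimpleGraph α) [DecidableRel G.Adj]

def indSets (V : Finset α) (k : ℕ) : Finset (Finset α) :=
  V.powerset.filter fun A => G.IsIndepSet (A : Set α) ∧ A.card ≤ k

def sdiffClosedNbhd (V A : Finset α) : Finset α :=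
  V.filter fun u => u ∉ A ∧ ∀ a ∈ A, ¬ G.Adj a u

variable {G} {V A B : Finset α} {k : ℕ}

lemma mem_indSets :
    A ∈ indSets G V k ↔ A ⊆ V ∧ G.IsIndepSet (A : Set α) ∧ A.card ≤ k := by
  rw [indSets, Finset.mem_filter, Finset.mem_powerset]

lemma mem_sdiffClosedNbhd {u : α} :
    u ∈ sdiffClosedNbhd G V A ↔ u ∈ V ∧ u ∉ A ∧ ∀ a ∈ A, ¬ G.Adj a u :=
  Finset.mem_filter

lemma mem_indSets_of_subset (hA : A ∈ indSets G V k) (hBA : B ⊆ A) : B ∈ indSets G V k := by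
  obtain ⟨hAV, hAind, hAk⟩ := mem_indSets.mp hA
  exact mem_indSets.mpr ⟨hBA.trans hAV, hAind.mono (Finset.coe_subset.mpr hBA),
    (Finset.card_le_card hBA).trans hAk⟩

lemma insert_mem_indSets (hA : A ∈ indSets G V k) (hcard : A.card < k) {w : α} (hw : w ∈ V)
    (hadj : ∀ a ∈ A, ¬ G.Adj a w) : insert w A ∈ indSets G V k := by
  obtain ⟨hAV, hAind, -⟩ := mem_indSets.mp hA
  rw [mem_indSets, Finset.coe_insert]
  exact ⟨Finset.insert_subset hw hAV,
    hAind.insert fun a ha _ => ⟨fun h => hadj a ha h.symm, hadj a ha⟩,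
    (Finset.card_insert_le w A).trans hcard⟩

lemma insert_erase_mem_indSets (hA : A ∈ indSets G V k) {v w : α} (hvA : v ∈ A) (hw : w ∈ V)
    (hadj : ∀ a ∈ A.erase v, ¬ G.Adj a w) : insert w (A.erase v) ∈ indSets G V k :=
  insert_mem_indSets (mem_indSets_of_subset hA (Finset.erase_subset v A))
    ((Finset.card_erase_lt_of_mem hvA).trans_le (mem_indSets.mp hA).2.2) hw hadj

lemma indSets_zero (V : Finset α) : indSets G V 0 = (∅ : Finset α).powerset := by
  ext A
  simp only [mem_indSets, nonpos_iff_eq_zero, Finset.card_eq_zero, Finset.powerset_empty,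
    Finset.mem_singleton]
  constructor
  · exact fun h => h.2.2
  · rintro rfl
    simp

lemma indSets_eq_powerset (hV : G.IsIndepSet (V : Set α)) (hk : V.card ≤ k) :
    indSets G V k = V.powerset := by
  ext A
  rw [mem_indSets, Finset.mem_powerset]
  exact ⟨fun h => h.1, fun h => ⟨h, hV.mono (Finset.coe_subset.mpr h),
    (Finset.card_le_card h).trans hk⟩⟩

lemma del_indSets (V : Finset α) (k : ℕ) (v : α) :
    del (indSets G V k) v = indSets G (V.erase v) k := by
  ext A
  rw [mem_del, mem_indSets, mem_indSets, Finset.subset_erase]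
  tauto

lemma link_indSets (hA : A ∈ indSets G V k) :
    link (indSets G V k) A = indSets G (sdiffClosedNbhd G V A) (k - A.card) := by
  obtain ⟨hAV, hAind, hAk⟩ := mem_indSets.mp hA
  ext B
  rw [link, Finset.mem_filter, mem_indSets, mem_indSets, mem_indSets, Finset.coe_union,
    G.isIndepSet_iff (s := _ ∪ _), Set.pairwise_union]
  constructor
  · rintro ⟨⟨-, hBind, -⟩, hBA, hBAV, ⟨-, -, hcross⟩, hcard⟩
    refine ⟨fun u hu => mem_sdiffClosedNbhd.mpr ⟨hBAV (Finset.mem_union_left A hu),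
      Finset.disjoint_left.mp hBA hu, fun a ha => ?_⟩, hBind, ?_⟩
    · exact (hcross u hu a ha fun h => Finset.disjoint_left.mp hBA hu (h ▸ ha)).2
    · rw [Finset.card_union_of_disjoint hBA] at hcard
      omega
  · rintro ⟨hBV, hBind, hBk⟩
    have hB : ∀ u ∈ B, u ∈ V ∧ u ∉ A ∧ ∀ a ∈ A, ¬ G.Adj a u :=
      fun u hu => mem_sdiffClosedNbhd.mp (hBV hu)
    have hBA : Disjoint B A := Finset.disjoint_left.mpr fun {u} hu => (hB u hu).2.1
    refine ⟨⟨fun u hu => (hB u hu).1, hBind, by omega⟩, hBA,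
      Finset.union_subset (fun u hu => (hB u hu).1) hAV, ⟨hBind, hAind,
      fun u hu a ha _ => ⟨fun h => (hB u hu).2.2 a ha h.symm, (hB u hu).2.2 a ha⟩⟩, ?_⟩
    rw [Finset.card_union_of_disjoint hBA]
    omega

lemma compCount_le_compCount_sdiffClosedNbhd_add (hA : A ⊆ V) :
    compCount G V ≤ compCount G (sdiffClosedNbhd G V A) + A.card := by
  refine compCount_le_add_card (Finset.filter_subset _ _) hA fun x hx hxWA => ?_
  have hxA : x ∉ A := fun h => hxWA (Finset.mem_union_right _ h)
  have : ¬ ∀ a ∈ A, ¬ G.Adj a x := fun h =>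
    hxWA (Finset.mem_union_left _ (mem_sdiffClosedNbhd.mpr ⟨hx, hxA, h⟩))
  push Not at this
  obtain ⟨a, ha, hax⟩ := this
  exact ⟨a, Finset.mem_union_right _ ha, hax.symm⟩

lemma exists_superset_mem_indSets_card_eq (hk : k ≤ compCount G V) (hA : A ∈ indSets G V k) :
    ∃ B ∈ indSets G V k, A ⊆ B ∧ B.card = k := by
  induction hd : k - A.card generalizing A with
  | zero => exact ⟨A, hA, subset_rfl, by have := (mem_indSets.mp hA).2.2; omega⟩
  | succ d ih =>
    have hAk : A.card < k := by omega
    obtain ⟨w, hw, hout⟩ := exists_inducedComp_avoiding (mem_indSets.mp hA).1 (hAk.trans_le hk)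
    obtain ⟨hwA, hadj⟩ := hout w hw rfl
    obtain ⟨B, hB, hAB, hBk⟩ := ih (insert_mem_indSets hA hAk hw hadj)
      (by rw [Finset.card_insert_of_notMem hwA]; omega)
    exact ⟨B, hB, (Finset.subset_insert w A).trans hAB, hBk⟩

lemma isPure_indSets (hk : k ≤ compCount G V) : IsPure k (indSets G V k) :=
  fun _ hA => ⟨(mem_indSets.mp hA).2.2, exists_superset_mem_indSets_card_eq hk hA⟩

lemma isShedding_indSets_of_lt (hk : k < compCount G V) (v : α) :
    IsShedding (indSets G V k) v := by
  intro A hA hvA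
  obtain ⟨hAV, -, hAk⟩ := mem_indSets.mp hA
  obtain ⟨w, hw, hout⟩ := exists_inducedComp_avoiding hAV (hAk.trans_lt hk)
  obtain ⟨hwA, hadj⟩ := hout w hw rfl
  exact ⟨w, ne_of_mem_of_not_mem hvA hwA |>.symm, hwA,
    insert_erase_mem_indSets hA hvA hw fun a ha => hadj a (Finset.mem_of_mem_erase ha)⟩

/-- The component of `G[V]` avoided by `A \ {v}` may be that of `v`, in which case the
neighbour `u` of `v` is exchanged for `v`. -/
lemma isShedding_indSets_of_adj (hk : k ≤ compCount G V) {u v : α} (hu : u ∈ V)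
    (hvu : G.Adj v u) : IsShedding (indSets G V k) v := by
  intro A hA hvA
  obtain ⟨hAV, -, hAk⟩ := mem_indSets.mp hA
  obtain ⟨w, hw, hout⟩ := exists_inducedComp_avoiding ((Finset.erase_subset v A).trans hAV)
    ((Finset.card_erase_lt_of_mem hvA).trans_le (hAk.trans hk))
  obtain ⟨x, hx, hxv, hxw⟩ : ∃ x, ∃ hx : x ∈ V, x ≠ v ∧
      inducedComp G V x hx = inducedComp G V w hw := by
    by_cases hwv : w = v
    · subst hwv
      exact ⟨u, hu, G.ne_of_adj hvu.symm, inducedComp_eq_of_adj hu hw hvu.symm⟩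
    · exact ⟨w, hw, hwv, rfl⟩
  obtain ⟨hxA, hadj⟩ := hout x hx hxw
  exact ⟨x, hxv, fun h => hxA (Finset.mem_erase.mpr ⟨hxv, h⟩),
    insert_erase_mem_indSets hA hvA hx hadj⟩

lemma empty_mem_indSets (V : Finset α) (k : ℕ) : ∅ ∈ indSets G V k :=
  mem_indSets.mpr ⟨Finset.empty_subset V, by simp, Nat.zero_le k⟩

lemma singleton_mem_indSets (hk : 0 < k) {v : α} (hv : v ∈ V) : {v} ∈ indSets G V k :=
  insert_mem_indSets (empty_mem_indSets V k) (by simpa using hk) hv (by simp)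

theorem vertexDecomposable_indSets (V : Finset α) (k : ℕ) (hk : k ≤ compCount G V) :
    VertexDecomposable (indSets G V k) := by
  induction V using Finset.strongInduction generalizing k with | H V ih =>
  obtain rfl | hk0 := k.eq_zero_or_pos
  · rw [indSets_zero]
    exact .simplex ∅
  have hlink : ∀ v ∈ V, VertexDecomposable (link (indSets G V k) {v}) := by
    intro v hv
    rw [link_indSets (singleton_mem_indSets hk0 hv), Finset.card_singleton]
    have hc := compCount_le_compCount_sdiffClosedNbhd_add (G := G)
      (Finset.singleton_subset_iff.mpr hv)
    have hsub : sdiffClosedNbhd G V {v} ⊂ V :=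
      (Finset.ssubset_iff_of_subset (Finset.filter_subset _ _)).mpr
        ⟨v, hv, fun h => (mem_sdiffClosedNbhd.mp h).2.1 (Finset.mem_singleton_self v)⟩
    refine ih _ hsub _ ?_
    rw [Finset.card_singleton] at hc
    omega
  rcases hk.lt_or_eq with hlt | heq
  · obtain ⟨v, hv, -⟩ := exists_inducedComp_avoiding (Finset.empty_subset V) (hk0.trans hlt)
    refine .shed _ v (isShedding_indSets_of_lt hlt v) ?_ (hlink v hv)
    rw [del_indSets]
    have := compCount_le_compCount_erase_add_one (G := G) hv
    exact ih _ (Finset.erase_ssubset hv) _ (by omega)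
  by_cases hedge : ∃ v ∈ V, ∃ u ∈ V, G.Adj v u
  · obtain ⟨v, hv, u, hu, hvu⟩ := hedge
    refine .shed _ v (isShedding_indSets_of_adj hk hu hvu) ?_ (hlink v hv)
    rw [del_indSets]
    exact ih _ (Finset.erase_ssubset hv) _ (hk.trans (compCount_le_compCount_erase_of_adj hu hvu))
  · push Not at hedge
    have hind : G.IsIndepSet (V : Set α) := fun a ha b hb _ => hedge a ha b hb
    rw [indSets_eq_powerset hind (heq ▸ card_le_compCount hind)]
    exact .simplex V

end IndependentSets

theorem isCM_indSets {α : Type} [LinearOrder α] (F : Type) [Field F] (G : SimpleGraph α)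
    [DecidableRel G.Adj] {V : Finset α} {k : ℕ} (hk : k ≤ compCount G V) :
    IsCM F (indSets G V k) := by
  refine isCM_of_forall_link F fun A hA => ⟨k - A.card, ?_⟩
  have hk' : k - A.card ≤ compCount G (sdiffClosedNbhd G V A) := by
    have := compCount_le_compCount_sdiffClosedNbhd_add (G := G) (mem_indSets.mp hA).1
    omega
  rw [link_indSets hA]
  exact ⟨vertexDecomposable_indSets _ _ hk', isPure_indSets hk'⟩

lemma skeleton_indComplex (n : ℕ) (G : SimpleGraph (Fin n)) [DecidableRel G.Adj] (r : ℕ) :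
    skeleton (indComplex n G) ((r : ℤ) - 1) = indSets G Finset.univ r := by
  ext A
  have hind : (∀ a ∈ A, ∀ b ∈ A, ¬ G.Adj a b) ↔ G.IsIndepSet (A : Set (Fin n)) :=
    ⟨fun h a ha b hb _ => h a ha b hb, fun h a ha b hb hab => h ha hb (G.ne_of_adj hab) hab⟩
  simp only [skeleton, indComplex, Finset.mem_filter, Finset.mem_powerset, mem_indSets, hind,
    sub_add_cancel, Nat.cast_le, Finset.subset_univ, true_and]

/-- **Skeleta of independence complexes of graphs with many components.** If `G`
is a graph with `r` connected components, then the `(r-1)`-dimensional skeleton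
of the independence complex of `G` is vertex-decomposable; consequently
`depth(Ind(G)) ≥ r - 1` over every field. -/
theorem indComplex_skeleton_vertexDecomposable (n : ℕ) (G : SimpleGraph (Fin n))
    [DecidableRel G.Adj] (r : ℕ) (hr : Nat.card G.ConnectedComponent = r) :
    VertexDecomposable (skeleton (indComplex n G) ((r : ℤ) - 1)) ∧
      ∀ (F : Type) [Field F], depthC F (indComplex n G) ≥ (r : ℤ) - 1 := by
  have hk : r ≤ compCount G Finset.univ := (compCount_univ.trans hr).ge
  have hdim : (r : ℤ) - 1 ≤ dimC (indComplex n G) := calc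
    (r : ℤ) - 1 = dimC (indSets G Finset.univ r) :=
      ((isPure_indSets hk).dimC_eq ⟨∅, empty_mem_indSets _ _⟩).symm
    _ ≤ dimC (indComplex n G) := by
      rw [← skeleton_indComplex]
      exact dimC_mono (Finset.filter_subset _ _)
  rw [skeleton_indComplex]
  refine ⟨vertexDecomposable_indSets _ _ hk, fun F _ => le_depthC F hdim ?_⟩
  rw [skeleton_indComplex]
  exact isCM_indSets F G hk
end

section
/- Let Δ be a simplicial complex whose smallest facet has d vertices, and let s ≤ r ≤ d − s. Then there exists an injection ψ from the set of s-element faces of Δ to the set of r-element faces of Δ such that A ⊆ ψ(A) for every s-element face A. In particular, f_s(Δ) ≤ f_r(Δ). -/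
open Finset

/-
Every `s`-face lies in a facet of size at least `d`, hence in at least `C(d - s, r - s)`
`r`-faces, while every `r`-face contains exactly `C(r, s)` `s`-faces. Since `r ≤ d - s`,
`C(r, s) = C(r, r - s) ≤ C(d - s, r - s)`, so the containment graph between `s`-faces and
`r`-faces satisfies Hall's condition by double counting, and a matching gives `ψ`.
-/

theorem Finset.exists_injOn_of_card_bipartiteBelow_le_card_bipartiteAbove {ι κ : Type*}
    [DecidableEq κ] [Nonempty κ] (R : ι → κ → Prop) [∀ i j, Decidable (R i j)]
    {S : Finset ι} {T : Finset κ} {a b : ℕ}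
    (hS : ∀ i ∈ S, a ≤ #(T.bipartiteAbove R i)) (hT : ∀ j ∈ T, #(S.bipartiteBelow R j) ≤ b)
    (hba : b ≤ a) (ha : 0 < a) :
    ∃ f : ι → κ, Set.InjOn f S ∧ ∀ i ∈ S, f i ∈ T ∧ R i (f i) := by
  let nbhd : S → Finset κ := fun i => T.bipartiteAbove R i
  have hall : ∀ J : Finset S, #J ≤ #(J.biUnion nbhd) := by
    intro J
    refine Nat.le_of_mul_le_mul_right ?_ ha
    calc #J * a ≤ #(J.biUnion nbhd) * b := by
          refine card_mul_le_card_mul (s := J) (t := J.biUnion nbhd) (fun (i : S) j => R i j)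
            (fun i hi => ?_) (fun j hj => ?_)
          · refine (hS i i.2).trans (card_le_card fun j hj => ?_)
            exact mem_filter.2 ⟨mem_biUnion.2 ⟨i, hi, hj⟩, (mem_filter.1 hj).2⟩
          · obtain ⟨i, -, hji⟩ := mem_biUnion.1 hj
            refine le_trans ?_ (hT j (mem_filter.1 hji).1)
            refine card_le_card_of_injOn Subtype.val (fun k hk => ?_) Subtype.val_injective.injOn
            exact mem_filter.2 ⟨k.2, (mem_filter.1 hk).2⟩
      _ ≤ #(J.biUnion nbhd) * a := Nat.mul_le_mul_left _ hba
  obtain ⟨f, hf, hfT⟩ := (all_card_le_biUnion_card_iff_exists_injective nbhd).1 hall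
  classical
  refine ⟨fun i => if h : i ∈ S then f ⟨i, h⟩ else Classical.arbitrary κ, ?_, fun i hi => ?_⟩
  · intro i hi i' hi' h
    rw [mem_coe] at hi hi'
    simp only [dif_pos hi, dif_pos hi'] at h
    exact congrArg Subtype.val (hf h)
  · simpa [dif_pos hi] using mem_filter.1 (hfT ⟨i, hi⟩)

theorem exists_isFacet_superset {α : Type} {Δ : Finset (Finset α)} {A : Finset α}
    (hA : A ∈ Δ) : ∃ F, IsFacet Δ F ∧ A ⊆ F := by
  obtain ⟨F, hAF, hF⟩ := Δ.exists_le_maximal hA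
  exact ⟨F, ⟨hF.1, fun B hB hFB => le_antisymm (hF.2 hB hFB) hFB⟩, hAF⟩

theorem choose_le_card_filter_superset {α : Type} [DecidableEq α] {Δ : Finset (Finset α)}
    (hdown : ∀ A ∈ Δ, ∀ B ⊆ A, B ∈ Δ) {d r : ℕ} (hfacet : ∀ F, IsFacet Δ F → d ≤ F.card)
    {A : Finset α} (hA : A ∈ Δ) (hAr : #A ≤ r) :
    (d - #A).choose (r - #A) ≤ #{B ∈ Δ | #B = r ∧ A ⊆ B} := by
  obtain ⟨F, hF, hAF⟩ := exists_isFacet_superset hA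
  calc (d - #A).choose (r - #A) ≤ (#F - #A).choose (r - #A) :=
        Nat.choose_le_choose _ (Nat.sub_le_sub_right (hfacet F hF) _)
    _ = #{B ∈ F.powersetCard r | A ⊆ B} := (card_filter_powersetCard_subset A F r hAF hAr).symm
    _ ≤ #{B ∈ Δ | #B = r ∧ A ⊆ B} := by
        refine card_le_card fun B hB => ?_
        obtain ⟨hBF, hAB⟩ := mem_filter.1 hB
        obtain ⟨hBF, hBr⟩ := mem_powersetCard.1 hBF
        exact mem_filter.2 ⟨hdown F hF.1 B hBF, hBr, hAB⟩

theorem card_filter_card_eq_subset_le_choose {α : Type} [DecidableEq α]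
    (𝒜 : Finset (Finset α)) (B : Finset α) (s : ℕ) : #{A ∈ 𝒜 | #A = s ∧ A ⊆ B} ≤ (#B).choose s := by
  rw [← card_powersetCard]
  exact card_le_card fun A hA => by
    obtain ⟨-, hAs, hAB⟩ := mem_filter.1 hA
    exact mem_powersetCard.2 ⟨hAB, hAs⟩

theorem hibi_injection_general {α : Type} [DecidableEq α] (Δ : Finset (Finset α))
    (hΔ : IsComplex Δ) (d : ℕ)
    (hfacet : ∀ A, IsFacet Δ A → d ≤ A.card)
    (s r : ℕ) (hsr : s ≤ r) (hrd : r ≤ d - s) :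
    (∃ ψ : Finset α → Finset α,
      Set.InjOn ψ {A | A ∈ Δ ∧ A.card = s} ∧
      ∀ A ∈ Δ, A.card = s → ψ A ∈ Δ ∧ (ψ A).card = r ∧ A ⊆ ψ A) ∧
    (Δ.filter fun A => A.card = s).card ≤ (Δ.filter fun A => A.card = r).card := by
  have hchoose : r.choose s ≤ (d - s).choose (r - s) :=
    Nat.choose_symm hsr ▸ Nat.choose_le_choose _ hrd
  obtain ⟨ψ, hψinj, hψ⟩ :=
    exists_injOn_of_card_bipartiteBelow_le_card_bipartiteAbove (· ⊆ ·)
      (S := {A ∈ Δ | #A = s}) (T := {B ∈ Δ | #B = r})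
      (fun A hA => by
        obtain ⟨hAΔ, rfl⟩ := mem_filter.1 hA
        simpa [bipartiteAbove, filter_filter] using
          choose_le_card_filter_superset hΔ.2 hfacet hAΔ hsr)
      (fun B hB => by
        obtain ⟨-, hBr⟩ := mem_filter.1 hB
        simpa [bipartiteBelow, filter_filter, hBr] using
          card_filter_card_eq_subset_le_choose Δ B s)
      hchoose (Nat.choose_pos hsr |>.trans_le hchoose)
  refine ⟨⟨ψ, fun A hA A' hA' h => hψinj (mem_filter.2 hA) (mem_filter.2 hA') h,
    fun A hA hAs => ?_⟩, card_le_card_of_injOn ψ (fun A hA => (hψ A hA).1) hψinj⟩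
  obtain ⟨hψA, hAψ⟩ := hψ A (mem_filter.2 ⟨hA, hAs⟩)
  exact ⟨(mem_filter.1 hψA).1, (mem_filter.1 hψA).2, hAψ⟩

/-- **Hibi's lemma.** Let `Δ` be a simplicial complex whose smallest facet has
`d` vertices, and let `s ≤ r ≤ d - s`. Then there is an injection `ψ` from the
`s`-element faces of `Δ` to the `r`-element faces of `Δ` with `A ⊆ ψ(A)` for
every `s`-element face `A`; in particular `f_s(Δ) ≤ f_r(Δ)`. -/
theorem hibi_injection {α : Type} [DecidableEq α] (Δ : Finset (Finset α))
    (hΔ : IsComplex Δ) (d : ℕ)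
    (hmin : ∃ A, IsFacet Δ A ∧ A.card = d)
    (hfacet : ∀ A, IsFacet Δ A → d ≤ A.card)
    (s r : ℕ) (hsr : s ≤ r) (hrd : r ≤ d - s) :
    (∃ ψ : Finset α → Finset α,
      Set.InjOn ψ {A | A ∈ Δ ∧ A.card = s} ∧
      ∀ A ∈ Δ, A.card = s → ψ A ∈ Δ ∧ (ψ A).card = r ∧ A ⊆ ψ A) ∧
    (Δ.filter fun A => A.card = s).card ≤ (Δ.filter fun A => A.card = r).card :=
  hibi_injection_general Δ hΔ d hfacet s r hsr hrd
end

section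
/- Let 𝒜 be a family of r-element subsets of a finite set, and let a be an element. Suppose 𝒜 is invariant under all shift operations S_{a←w} (for w ≠ a), i.e., 𝒜 is shifted with respect to a. If 𝒜 has no common element, then there exists A ∈ 𝒜 with a ∉ A, and 𝒜 contains all r-element subsets of A ∪ {a}, i.e., 𝒜 spans a simplex boundary. -/
/-- **Shifted intersecting families with no common element span a simplex
boundary.** Let `𝒜` be a family of `r`-element finite sets that is shifted with
respect to `a` (whenever `A ∈ 𝒜`, `w ∈ A`, and `a ∉ A`, then
`(A \ {w}) ∪ {a} ∈ 𝒜`). If `𝒜` has no common element, then there is `A ∈ 𝒜`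
with `a ∉ A` such that `𝒜` contains all `r`-element subsets of `A ∪ {a}`,
i.e. `𝒜` spans a simplex boundary. -/
theorem shifted_no_common_spans_simplex_boundary {α : Type} [DecidableEq α]
    (𝒜 : Finset (Finset α)) (r : ℕ) (a : α)
    (hcard : ∀ A ∈ 𝒜, A.card = r)
    (hshift : ∀ A ∈ 𝒜, ∀ w ∈ A, a ∉ A → insert a (A.erase w) ∈ 𝒜)
    (hnc : ¬ ∃ x : α, ∀ A ∈ 𝒜, x ∈ A) :
    ∃ A ∈ 𝒜, a ∉ A ∧ ∀ B ⊆ insert a A, B.card = r → B ∈ 𝒜 := by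
  push_neg at hnc
  obtain ⟨A, hA, haA⟩ := hnc a
  refine ⟨A, hA, haA, ?_⟩
  intro B hB hBcard
  have hAr := hcard A hA
  have hcardins : (insert a A).card = r + 1 := by
    rw [Finset.card_insert_of_notMem haA, hAr]
  have hsd : (insert a A \ B).card = 1 := by
    rw [Finset.card_sdiff_of_subset hB, hcardins, hBcard]; omega
  obtain ⟨x, hx⟩ := Finset.card_eq_one.mp hsd
  have hBeq : B = (insert a A).erase x := by
    rw [Finset.erase_eq, ← hx, Finset.sdiff_sdiff_eq_self hB]
  by_cases hxa : x = a
  · rw [hBeq, hxa, Finset.erase_insert haA]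
    exact hA
  · have hxmem : x ∈ insert a A := by
      have : x ∈ insert a A \ B := by rw [hx]; exact Finset.mem_singleton_self x
      exact (Finset.mem_sdiff.mp this).1
    have hxA : x ∈ A := (Finset.mem_insert.mp hxmem).resolve_left hxa
    rw [hBeq, Finset.erase_insert_of_ne (fun h => hxa h.symm)]
    exact hshift A hA x hxA haA
end
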